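/- (Pathwise dominance of the greedy policy.) Fix a transmission energy threshold Ē, a battery capacity B_cap, an initial battery level B0 ≤ B_cap, a harvest sequence H : ℕ → ℕ, and a channel success indicator sequence g : ℕ → {0,1}. For every admissible usage sequence ε and every time t ∈ ℕ, the number of successful loop closures of ε through time t is at most that of the greedy usage sequence: N^S_ε(t) ≤ N^S_g(t). -/

import Mathlib

/-- Battery trajectory induced by a usage sequence `ε`:
`B_ε(0) = B0`, `B_ε(t+1) = min(Bcap, max(0, B_ε(t) + H(t) - ε(t)))`
(truncated subtraction on `ℕ` realizes the `max(0, ·)`). -/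
def batt (Bcap B0 : ℕ) (H ε : ℕ → ℕ) : ℕ → ℕ
  | 0 => B0
  | t + 1 => min Bcap (batt Bcap B0 H ε t + H t - ε t)

/-- A usage sequence is admissible if it never uses more energy than is available. -/
def Admissible (Bcap B0 : ℕ) (H ε : ℕ → ℕ) : Prop :=
  ∀ t, ε t ≤ batt Bcap B0 H ε t + H t

/-- Battery trajectory of the greedy usage sequence. -/
def greedyBatt (Ebar Bcap B0 : ℕ) (H : ℕ → ℕ) : ℕ → ℕ
  | 0 => B0
  | t + 1 =>
    min Bcap (greedyBatt Ebar Bcap B0 H t + H t -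
      (if Ebar ≤ greedyBatt Ebar Bcap B0 H t + H t then Ebar else 0))

/-- The greedy usage sequence: use exactly `Ebar` units of energy whenever possible. -/
def greedyUse (Ebar Bcap B0 : ℕ) (H : ℕ → ℕ) (t : ℕ) : ℕ :=
  if Ebar ≤ greedyBatt Ebar Bcap B0 H t + H t then Ebar else 0

/-- Number of transmission attempts of the usage sequence `ε` through time `t`,
i.e. `#{τ ≤ t : ε(τ) ≥ Ebar}`. -/
def attempts (Ebar : ℕ) (ε : ℕ → ℕ) (t : ℕ) : ℕ :=
  ((Finset.range (t + 1)).filter fun τ => Ebar ≤ ε τ).card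

/-- Number of successful loop closures of the usage sequence `ε` through time `t`,
given a channel success indicator sequence `g`: `N^S_ε(t) = Σ_{ℓ < N^A_ε(t)} g(ℓ)`. -/
def successes (Ebar : ℕ) (g : ℕ → ℕ) (ε : ℕ → ℕ) (t : ℕ) : ℕ :=
  ∑ ℓ ∈ Finset.range (attempts Ebar ε t), g ℓ

/-!
The greedy policy keeps a *lead*: at every time it has made some number `d` of attempts more
than the admissible competitor `ε`, while `ε`'s battery exceeds the greedy battery by at most
`Ebar * d`, the energy greedy spent on those extra attempts. Whenever `ε` attempts and greedy
cannot, that surplus must be positive, so the lead never becomes negative. Hence greedy has made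
at least as many attempts, and the successes, being partial sums of the nonnegative `g`, follow.
-/

theorem attempts_eq_count (Ebar : ℕ) (ε : ℕ → ℕ) (t : ℕ) :
    attempts Ebar ε t = Nat.count (fun τ => Ebar ≤ ε τ) (t + 1) :=
  (Nat.count_eq_card_filter_range _ _).symm

theorem le_greedyUse_iff {Ebar Bcap B0 : ℕ} {H : ℕ → ℕ} {t : ℕ} :
    Ebar ≤ greedyUse Ebar Bcap B0 H t ↔ Ebar ≤ greedyBatt Ebar Bcap B0 H t + H t := by
  unfold greedyUse
  split_ifs <;> omega

theorem exists_lead_step {E b c h e d : ℕ} (he : e ≤ b + h) (hb : b ≤ c + E * d) :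
    ∃ d', d + (if E ≤ c + h then 1 else 0) = d' + (if E ≤ e then 1 else 0) ∧
      b + h - e ≤ c + h - (if E ≤ c + h then E else 0) + E * d' := by
  by_cases hg : E ≤ c + h <;> by_cases hε : E ≤ e <;> simp only [hg, hε, if_true, if_false]
  · exact ⟨d, rfl, by omega⟩
  · exact ⟨d + 1, rfl, by rw [mul_add_one]; omega⟩
  · obtain ⟨d', rfl⟩ : ∃ d', d = d' + 1 := Nat.exists_eq_add_one.mpr <|
      Nat.pos_of_ne_zero fun hd => by simp only [hd, mul_zero] at hb; omega
    exact ⟨d', rfl, by rw [mul_add_one] at hb; omega⟩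
  · exact ⟨d, rfl, by omega⟩

theorem exists_lead_of_admissible {Ebar Bcap B0 : ℕ} {H ε : ℕ → ℕ}
    (hadm : Admissible Bcap B0 H ε) (t : ℕ) :
    ∃ d, Nat.count (fun τ => Ebar ≤ greedyUse Ebar Bcap B0 H τ) t =
        Nat.count (fun τ => Ebar ≤ ε τ) t + d ∧
      batt Bcap B0 H ε t ≤ greedyBatt Ebar Bcap B0 H t + Ebar * d := by
  induction t with
  | zero => exact ⟨0, rfl, le_rfl⟩
  | succ t ih =>
    obtain ⟨d, hcount, hbatt⟩ := ih
    obtain ⟨d', hlead, hstep⟩ := exists_lead_step (hadm t) hbatt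
    refine ⟨d', ?_, ?_⟩
    · rw [Nat.count_succ, Nat.count_succ, hcount]
      simp only [le_greedyUse_iff (t := t)]
      omega
    · change min Bcap _ ≤ min Bcap (_ - greedyUse Ebar Bcap B0 H t) + _
      unfold greedyUse
      omega

theorem attempts_le_attempts_greedyUse {Ebar Bcap B0 : ℕ} {H ε : ℕ → ℕ}
    (hadm : Admissible Bcap B0 H ε) (t : ℕ) :
    attempts Ebar ε t ≤ attempts Ebar (greedyUse Ebar Bcap B0 H) t := by
  obtain ⟨d, hcount, -⟩ := exists_lead_of_admissible (Ebar := Ebar) hadm (t + 1)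
  rw [attempts_eq_count, attempts_eq_count, hcount]
  exact Nat.le_add_right _ _

theorem greedy_dominates_successes_general (Ebar Bcap B0 : ℕ)
    (H : ℕ → ℕ) (g : ℕ → ℕ)
    (ε : ℕ → ℕ) (hadm : Admissible Bcap B0 H ε) (t : ℕ) :
    successes Ebar g ε t ≤ successes Ebar g (greedyUse Ebar Bcap B0 H) t :=
  Finset.sum_le_sum_of_subset
    (Finset.range_subset_range.mpr (attempts_le_attempts_greedyUse hadm t))

/-- Pathwise dominance of the greedy policy: the greedy usage sequence dominates
every admissible usage sequence in the number of successful loop closures,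
at every time, for every channel success indicator sequence `g : ℕ → {0,1}`. -/
theorem greedy_dominates_successes (Ebar Bcap B0 : ℕ) (hB0 : B0 ≤ Bcap)
    (H : ℕ → ℕ) (g : ℕ → ℕ) (hg : ∀ ℓ, g ℓ = 0 ∨ g ℓ = 1)
    (ε : ℕ → ℕ) (hadm : Admissible Bcap B0 H ε) (t : ℕ) :
    successes Ebar g ε t ≤ successes Ebar g (greedyUse Ebar Bcap B0 H) t :=
  greedy_dominates_successes_general Ebar Bcap B0 H g ε hadm t
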